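/- Restrictions of containment structures compose transitively: if χ' is the g'-restriction of a containment structure χ and χ'' is the g''-restriction of χ', where g' : S∪Y → S'∪Y and g'' : S'∪Y → S''∪Y are restriction functions with S'' ⊆ S' ⊆ S, then χ'' equals the (g''∘g')-restriction of χ. -/

import Mathlib

namespace TreeContainment

open scoped Classical

variable {V Λ : Type}

/-- A directed graph with an explicit vertex set. -/
structure DGraph (V : Type) where
  verts : Set V
  Arc : V → V → Prop
  arc_left : ∀ ⦃u v : V⦄, Arc u v → u ∈ verts
  arc_right : ∀ ⦃u v : V⦄, Arc u v → v ∈ verts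

noncomputable def DGraph.inDeg (G : DGraph V) (v : V) : ℕ := {u : V | G.Arc u v}.ncard
noncomputable def DGraph.outDeg (G : DGraph V) (v : V) : ℕ := {u : V | G.Arc v u}.ncard
def DGraph.Acyclic (G : DGraph V) : Prop := ∀ v : V, ¬ Relation.TransGen G.Arc v v

def IsSubgraph (H G : DGraph V) : Prop :=
  H.verts ⊆ G.verts ∧ ∀ ⦃u v⦄, H.Arc u v → G.Arc u v

/-- The consecutive pairs (arcs) of a list of vertices. -/
def listArcs (p : List V) : List (V × V) := p.zip p.tail

def IsArcOf (p : List V) (a b : V) : Prop := (a, b) ∈ listArcs p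

lemma isArcOf_mem_left {p : List V} {a b : V} (h : IsArcOf p a b) : a ∈ p :=
  (List.of_mem_zip h).1

lemma isArcOf_mem_right {p : List V} {a b : V} (h : IsArcOf p a b) : b ∈ p :=
  List.mem_of_mem_tail (List.of_mem_zip h).2

/-- `p` is a directed path from `u` to `v` with respect to the arc relation `A`. -/
def DipathFrom (A : V → V → Prop) (u v : V) (p : List V) : Prop :=
  p.Chain' A ∧ p.Nodup ∧ p.head? = some u ∧ p.getLast? = some v

/-- Rooted binary phylogenetic network. -/
def IsBinPhyloNet (N : DGraph V) : Prop :=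
  N.Acyclic ∧ N.verts.Finite ∧ N.verts.Nonempty ∧
  (∃! ρ, ρ ∈ N.verts ∧ N.inDeg ρ = 0) ∧
  ∀ v ∈ N.verts,
    (N.inDeg v = 0 ∧ N.outDeg v = 2) ∨ (N.inDeg v = 1 ∧ N.outDeg v = 0) ∨
    (N.inDeg v = 2 ∧ N.outDeg v = 1) ∨ (N.inDeg v = 1 ∧ N.outDeg v = 2)

/-- Rooted binary phylogenetic tree: a binary phylogenetic network without reticulations. -/
def IsBinPhyloTree (T : DGraph V) : Prop :=
  IsBinPhyloNet T ∧ ∀ v ∈ T.verts, T.inDeg v ≤ 1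

def leaves (G : DGraph V) : Set V :=
  {v : V | v ∈ G.verts ∧ G.inDeg v = 1 ∧ G.outDeg v = 0}

/-- Equally labelled leaves of `N` and `T` are identified: the common vertices of the two
graphs are exactly the leaves of each side. -/
def SharedLeaves (N T : DGraph V) : Prop :=
  N.verts ∩ T.verts = leaves N ∧ N.verts ∩ T.verts = leaves T

/-- A witness that `H` is a subdivision of the tree `Tg`. -/
structure SubdivWitness (H Tg : DGraph V) where
  vmap : V → V
  pmap : V → V → List V
  vmap_mem : ∀ u ∈ Tg.verts, vmap u ∈ H.verts
  inj : ∀ u ∈ Tg.verts, ∀ v ∈ Tg.verts, vmap u = vmap v → u = v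
  path_spec : ∀ ⦃u v⦄, Tg.Arc u v → DipathFrom H.Arc (vmap u) (vmap v) (pmap u v)
  path_len : ∀ ⦃u v⦄, Tg.Arc u v → 2 ≤ (pmap u v).length
  internal_new : ∀ ⦃u v⦄, Tg.Arc u v → ∀ z ∈ pmap u v, z ≠ vmap u → z ≠ vmap v →
    ∀ w ∈ Tg.verts, vmap w ≠ z
  internal_disjoint : ∀ ⦃u v u' v'⦄, Tg.Arc u v → Tg.Arc u' v' → (u, v) ≠ (u', v') →
    ∀ z, z ∈ pmap u v → z ∈ pmap u' v' →
      (z = vmap u ∨ z = vmap v) ∧ (z = vmap u' ∨ z = vmap v')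
  arcs_cover : ∀ a b, H.Arc a b → ∃ u v, Tg.Arc u v ∧ IsArcOf (pmap u v) a b
  verts_cover : ∀ z ∈ H.verts, (∃ u ∈ Tg.verts, vmap u = z) ∨ ∃ u v, Tg.Arc u v ∧ z ∈ pmap u v

/-- `N` displays `T`: some subgraph of `N` is a subdivision of `T`, respecting
the (identified) leaf labels. -/
def Displays (N T : DGraph V) : Prop :=
  ∃ H : DGraph V, IsSubgraph H N ∧
    ∃ w : SubdivWitness H T, ∀ u ∈ T.verts ∩ N.verts, w.vmap u = u

/-- An embedding function of the tree `Tg` into the network `Ng`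
(an embedding function on the display graph `D(Ng,Tg)`). -/
structure EmbOn (Tg Ng : DGraph V) where
  vmap : V → V
  pmap : V → V → List V
  vmap_mem : ∀ u ∈ Tg.verts, vmap u ∈ Ng.verts
  path_spec : ∀ ⦃u v⦄, Tg.Arc u v → DipathFrom Ng.Arc (vmap u) (vmap v) (pmap u v)
  inj : ∀ u ∈ Tg.verts, ∀ v ∈ Tg.verts, vmap u = vmap v → u = v
  fixes : ∀ u ∈ Tg.verts ∩ Ng.verts, vmap u = u
  arc_disjoint : ∀ ⦃u v u' v'⦄, Tg.Arc u v → Tg.Arc u' v' → (u, v) ≠ (u', v') →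
    ∀ e, e ∈ listArcs (pmap u v) → e ∉ listArcs (pmap u' v')
  share : ∀ ⦃u v u' v'⦄, Tg.Arc u v → Tg.Arc u' v' → (u, v) ≠ (u', v') →
    ∀ z, z ∈ pmap u v → z ∈ pmap u' v' →
      ∃ w, (w = u ∨ w = v) ∧ (w = u' ∨ w = v') ∧ vmap w = z

/-- The subgraph of the network consisting of all arcs lying on some embedding path. -/
def usedSubgraph (Tg Ng : DGraph V) (φ : EmbOn Tg Ng) : DGraph V where
  verts := {z : V | ∃ u v, Tg.Arc u v ∧ z ∈ φ.pmap u v}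
  Arc a b := ∃ u v, Tg.Arc u v ∧ IsArcOf (φ.pmap u v) a b
  arc_left := by
    rintro a b ⟨u, v, huv, harc⟩
    exact ⟨u, v, huv, isArcOf_mem_left harc⟩
  arc_right := by
    rintro a b ⟨u, v, huv, harc⟩
    exact ⟨u, v, huv, isArcOf_mem_right harc⟩

/-- A display graph: a DAG whose vertex set is covered by a tree side `VT`
and a network side `VN`, satisfying the degree conditions of the paper. -/
structure DispGraph (V : Type) extends DGraph V where
  VT : Set V
  VN : Set V
  union_eq : VT ∪ VN = verts
  finite : verts.Finite
  acyclic : ∀ v : V, ¬ Relation.TransGen Arc v v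
  tree_indeg : ∀ v : V, {u : V | Arc u v ∧ u ∈ VT ∧ v ∈ VT}.ncard ≤ 1
  indeg_le : ∀ v : V, {u : V | Arc u v}.ncard ≤ 2
  outdeg_le : ∀ v : V, {u : V | Arc v u}.ncard ≤ 2
  totdeg_le : ∀ v : V, {u : V | Arc u v}.ncard + {u : V | Arc v u}.ncard ≤ 3
  shared_out : ∀ v ∈ VT ∩ VN, ∀ u, ¬ Arc v u
  shared_in_T : ∀ v ∈ VT ∩ VN, {u : V | Arc u v ∧ u ∈ VT}.ncard ≤ 1
  shared_in_N : ∀ v ∈ VT ∩ VN, {u : V | Arc u v ∧ u ∈ VN}.ncard ≤ 1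

/-- The tree side of a display graph. -/
def DispGraph.treeSide (G : DispGraph V) : DGraph V where
  verts := G.VT
  Arc u v := G.Arc u v ∧ u ∈ G.VT ∧ v ∈ G.VT
  arc_left := by intro u v h; exact h.2.1
  arc_right := by intro u v h; exact h.2.2

/-- The network side of a display graph. -/
def DispGraph.netSide (G : DispGraph V) : DGraph V where
  verts := G.VN
  Arc u v := G.Arc u v ∧ u ∈ G.VN ∧ v ∈ G.VN
  arc_left := by intro u v h; exact h.2.1
  arc_right := by intro u v h; exact h.2.2

def DispGraph.TArc (G : DispGraph V) (u v : V) : Prop := G.treeSide.Arc u v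
def DispGraph.NArc (G : DispGraph V) (u v : V) : Prop := G.netSide.Arc u v
noncomputable def DispGraph.inDeg (G : DispGraph V) : V → ℕ := G.toDGraph.inDeg
noncomputable def DispGraph.outDeg (G : DispGraph V) : V → ℕ := G.toDGraph.outDeg

/-- An embedding function on a display graph: an embedding of its tree side into
its network side. -/
abbrev EmbFun (G : DispGraph V) := EmbOn G.treeSide G.netSide

/-- The data of a containment structure: a display graph, an embedding function on it,
and an isolabelling into vertices of the ambient display graph or labels from `Λ`. -/
structure CStruct (V Λ : Type) where
  G : DispGraph V
  emb : EmbFun G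
  ι : V → V ⊕ Λ

/-- Relabelling a containment structure by a restriction function. -/
def CStruct.relabel (g : V ⊕ Λ → V ⊕ Λ) (χ : CStruct V Λ) : CStruct V Λ :=
  ⟨χ.G, χ.emb, fun v => g (χ.ι v)⟩

/-- `ι` is an `(S,Y)`-isolabelling on the display graph of `χ`, relative to the
ambient display graph `Din`. -/
def IsIsolabelling (Din : DispGraph V) (S : Set V) (Ys : Set Λ) (χ : CStruct V Λ) : Prop :=
  (∀ u ∈ χ.G.verts, (∃ s ∈ S, χ.ι u = Sum.inl s) ∨ (∃ y ∈ Ys, χ.ι u = Sum.inr y)) ∧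
  (∀ s ∈ S, ∃ u ∈ χ.G.verts, χ.ι u = Sum.inl s) ∧
  (∀ u ∈ χ.G.verts, ∀ s ∈ S, χ.ι u = Sum.inl s →
    (s ∈ Din.VN → u ∈ χ.G.VN) ∧ (s ∈ Din.VT → u ∈ χ.G.VT)) ∧
  (∀ u ∈ χ.G.verts, ∀ v ∈ χ.G.verts, ∀ s ∈ S, χ.ι u = Sum.inl s → χ.ι v = Sum.inl s → u = v) ∧
  (∀ u ∈ χ.G.verts, ∀ v ∈ χ.G.verts, ∀ s ∈ S, ∀ t ∈ S,
    χ.ι u = Sum.inl s → χ.ι v = Sum.inl t → (χ.G.Arc u v ↔ Din.Arc s t))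

/-- `χ` is an `(S,Y)`-containment structure relative to the ambient display graph `Din`. -/
def IsCS (Din : DispGraph V) (S : Set V) (Ys : Set Λ) (χ : CStruct V Λ) : Prop :=
  IsIsolabelling Din S Ys χ ∧
  (∀ u ∈ χ.G.verts, ∀ s ∈ S, χ.ι u = Sum.inl s →
    χ.G.inDeg u = Din.inDeg s ∧ χ.G.outDeg u = Din.outDeg s) ∧
  (∀ u ∈ χ.G.VT, χ.ι u ≠ χ.ι (χ.emb.vmap u) → χ.G.outDeg u = 2)

/-- A tree arc `uv` is `y`-redundant. -/
def TArcRedundant (χ : CStruct V Λ) (y : Λ) (u v : V) : Prop :=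
  χ.G.TArc u v ∧ χ.ι u = Sum.inr y ∧ χ.ι v = Sum.inr y ∧
    ∀ z ∈ χ.emb.pmap u v, χ.ι z = Sum.inr y

/-- A network arc `ab` is `y`-redundant. -/
def NArcRedundant (χ : CStruct V Λ) (y : Λ) (a b : V) : Prop :=
  χ.G.NArc a b ∧ χ.ι a = Sum.inr y ∧ χ.ι b = Sum.inr y ∧
    ∀ u v, χ.G.TArc u v → IsArcOf (χ.emb.pmap u v) a b → TArcRedundant χ y u v

def ArcRedundant (χ : CStruct V Λ) (y : Λ) (u v : V) : Prop :=
  TArcRedundant χ y u v ∨ NArcRedundant χ y u v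

/-- A tree vertex `v` is `y`-redundant. -/
def TVertRedundant (χ : CStruct V Λ) (y : Λ) (v : V) : Prop :=
  v ∈ χ.G.VT ∧ χ.ι v = Sum.inr y ∧ χ.ι (χ.emb.vmap v) = Sum.inr y ∧
  (∀ u, χ.G.Arc u v → ArcRedundant χ y u v) ∧
  (∀ u, χ.G.Arc v u → ArcRedundant χ y v u) ∧
  (∀ u, χ.G.Arc u (χ.emb.vmap v) → ArcRedundant χ y u (χ.emb.vmap v)) ∧
  (∀ u, χ.G.Arc (χ.emb.vmap v) u → ArcRedundant χ y (χ.emb.vmap v) u)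

/-- A network vertex `v` is `y`-redundant. -/
def NVertRedundant (χ : CStruct V Λ) (y : Λ) (v : V) : Prop :=
  v ∈ χ.G.VN ∧ χ.ι v = Sum.inr y ∧
  (∀ u, χ.G.Arc u v → ArcRedundant χ y u v) ∧
  (∀ u, χ.G.Arc v u → ArcRedundant χ y v u) ∧
  (∀ w ∈ χ.G.VT, χ.emb.vmap w = v → TVertRedundant χ y w)

def VertRedundant (χ : CStruct V Λ) (y : Λ) (v : V) : Prop :=
  TVertRedundant χ y v ∨ NVertRedundant χ y v

/-- `χ'` is the `g`-restriction of `χ`: relabel by `g` and delete all redundant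
arcs and vertices; the embedding and isolabelling are restricted accordingly. -/
def IsRestrictionOf (g : V ⊕ Λ → V ⊕ Λ) (χ' χ : CStruct V Λ) : Prop :=
  χ'.G.verts = χ.G.verts \ {v : V | ∃ y, VertRedundant (χ.relabel g) y v} ∧
  (∀ u v, χ'.G.Arc u v ↔ (χ.G.Arc u v ∧ ¬ ∃ y, ArcRedundant (χ.relabel g) y u v)) ∧
  χ'.G.VT = χ.G.VT ∩ χ'.G.verts ∧
  χ'.G.VN = χ.G.VN ∩ χ'.G.verts ∧
  (∀ v ∈ χ'.G.VT, χ'.emb.vmap v = χ.emb.vmap v) ∧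
  (∀ u v, χ'.G.TArc u v → χ'.emb.pmap u v = χ.emb.pmap u v) ∧
  (∀ v ∈ χ'.G.verts, χ'.ι v = g (χ.ι v))

/-- `g : S ∪ Y → S' ∪ Y` is a restriction function: identity on `S'`, mapping the rest
of `S` into `Y`, and mapping `Y` into `Y`. -/
def IsRestrictionFun (S S' : Set V) (Ys : Set Λ) (g : V ⊕ Λ → V ⊕ Λ) : Prop :=
  (∀ v ∈ S', g (Sum.inl v) = Sum.inl v) ∧
  (∀ v ∈ S, v ∉ S' → ∃ y ∈ Ys, g (Sum.inl v) = Sum.inr y) ∧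
  (∀ y ∈ Ys, ∃ y' ∈ Ys, g (Sum.inr y) = Sum.inr y')

/-- A well-behaved containment structure. -/
def WellBehaved (Din : DispGraph V) (Ys : Set Λ) (χ : CStruct V Λ) : Prop :=
  (∀ u v, χ.G.Arc u v → ¬ ∃ y ∈ Ys, ArcRedundant χ y u v) ∧
  (∀ v ∈ χ.G.verts, ¬ ∃ y ∈ Ys, VertRedundant χ y v) ∧
  (∀ u v, χ.G.Arc u v → ∀ y ∈ Ys, ∀ y' ∈ Ys,
    χ.ι u = Sum.inr y → χ.ι v = Sum.inr y' → y = y') ∧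
  (∀ u ∈ χ.G.verts, ∀ v ∈ χ.G.verts, ∀ s t : V, χ.ι u = Sum.inl s → χ.ι v = Sum.inl t →
    Relation.ReflTransGen χ.G.Arc u v → Relation.ReflTransGen Din.Arc s t)

/-- The labels used for signatures and reconciliations. -/
inductive Lab : Type where
  | past | future | left | right
deriving DecidableEq

/-- The restriction function sending every vertex of `P` to the label `y`. -/
noncomputable def sendVerts (P : Set V) (y : Lab) : V ⊕ Lab → V ⊕ Lab
  | Sum.inl v => if v ∈ P then Sum.inr y else Sum.inl v
  | Sum.inr y' => Sum.inr y'

/-- The restriction function sending `A` to label `a` and `B` to label `b`. -/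
noncomputable def sendVerts2 (A : Set V) (a : Lab) (B : Set V) (b : Lab) :
    V ⊕ Lab → V ⊕ Lab
  | Sum.inl v => if v ∈ A then Sum.inr a else if v ∈ B then Sum.inr b else Sum.inl v
  | Sum.inr y => Sum.inr y

/-- The restriction function merging all labels in `A` into the label `y`. -/
noncomputable def sendLabs (A : Set Lab) (y : Lab) : V ⊕ Lab → V ⊕ Lab
  | Sum.inl v => Sum.inl v
  | Sum.inr y' => if y' ∈ A then Sum.inr y else Sum.inr y'

/-- The restriction function sending label `a` to `ya` and label `b` to `yb`. -/
def sendTwoLabs (a ya b yb : Lab) : V ⊕ Lab → V ⊕ Lab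
  | Sum.inl v => Sum.inl v
  | Sum.inr y => if y = a then Sum.inr ya else if y = b then Sum.inr yb else Sum.inr y

/-- `(P,S,F)` is a bag of a tree decomposition of `Din`: a partition of the vertices
with `S` separating `P` from `F`. -/
def IsBag (Din : DispGraph V) (P S F : Set V) : Prop :=
  P ∪ S ∪ F = Din.verts ∧ Disjoint P S ∧ Disjoint P F ∧ Disjoint S F ∧
  ∀ u v, (Din.Arc u v ∨ Din.Arc v u) → u ∈ P → v ∈ F → False

def pfLabs : Set Lab := {Lab.past, Lab.future}
def lrfLabs : Set Lab := {Lab.left, Lab.right, Lab.future}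

/-- A signature for a bag with present `S` is an `(S,{past,future})`-containment structure. -/
def IsSignature (Din : DispGraph V) (S : Set V) (σ : CStruct V Lab) : Prop :=
  IsCS Din S pfLabs σ

/-- An `F`-partial solution for a bag `(P,S,F)` is a `(P∪S,{future})`-containment structure. -/
def IsPartialSolution (Din : DispGraph V) (P S : Set V) (ψ : CStruct V Lab) : Prop :=
  IsCS Din (P ∪ S) ({Lab.future} : Set Lab) ψ

/-- A (well-behaved) signature is valid for the bag `(P,S,F)` if it is the
`(P→past)`-restriction of a well-behaved `F`-partial solution. -/
def ValidSig (Din : DispGraph V) (P S F : Set V) (σ : CStruct V Lab) : Prop :=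
  ∃ ψ : CStruct V Lab, IsPartialSolution Din P S ψ ∧
    WellBehaved Din ({Lab.future} : Set Lab) ψ ∧
    IsRestrictionOf (sendVerts P Lab.past) σ ψ

/-- A reconciliation for a Join bag with present `S` is an
`(S,{left,right,future})`-containment structure. -/
def IsReconciliation (Din : DispGraph V) (S : Set V) (μ : CStruct V Lab) : Prop :=
  IsCS Din S lrfLabs μ

/-- A reconciliation is valid for the Join bag `(L∪R,S,F)` if it is the
`(L→left, R→right)`-restriction of a well-behaved `F`-partial solution. -/
def ValidRecon (Din : DispGraph V) (L R S F : Set V) (μ : CStruct V Lab) : Prop :=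
  ∃ ψ : CStruct V Lab, IsCS Din (L ∪ R ∪ S) ({Lab.future} : Set Lab) ψ ∧
    WellBehaved Din ({Lab.future} : Set Lab) ψ ∧
    IsRestrictionOf (sendVerts2 L Lab.left R Lab.right) μ ψ

/-- `z` is an internal vertex of the replacement path `Pm u v`. -/
def internalOf (Pm : V → V → List V) (u v z : V) : Prop :=
  z ∈ Pm u v ∧ z ≠ u ∧ z ≠ v

/-- `σ₀` is a subdivision of the containment structure `σ`, with each network
arc `uv` of `σ` replaced by the path `Pm u v`. -/
def IsSubdivisionOfCS (σ₀ σ : CStruct V Λ) (Pm : V → V → List V) : Prop :=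
  σ₀.G.VT = σ.G.VT ∧
  (∀ u v, σ₀.G.TArc u v ↔ σ.G.TArc u v) ∧
  σ.G.VN ⊆ σ₀.G.VN ∧
  σ₀.G.verts = σ.G.verts ∪ {z : V | ∃ u v, σ.G.NArc u v ∧ z ∈ Pm u v} ∧
  (∀ u v, σ.G.NArc u v → DipathFrom σ₀.G.NArc u v (Pm u v) ∧ 2 ≤ (Pm u v).length) ∧
  (∀ u v, σ.G.NArc u v → 2 < (Pm u v).length →
    ∃ y : Λ, σ.ι u = Sum.inr y ∧ σ.ι v = Sum.inr y) ∧
  (∀ u v, σ.G.NArc u v → ∀ z, internalOf Pm u v z →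
    z ∉ σ.G.verts ∧ z ∈ σ₀.G.VN ∧ σ₀.ι z = σ.ι u) ∧
  (∀ u v u' v', σ.G.NArc u v → σ.G.NArc u' v' → (u, v) ≠ (u', v') →
    ∀ z, internalOf Pm u v z → ¬ internalOf Pm u' v' z) ∧
  (∀ a b, σ₀.G.NArc a b ↔ ∃ u v, σ.G.NArc u v ∧ IsArcOf (Pm u v) a b) ∧
  (∀ v ∈ σ.G.verts, σ₀.ι v = σ.ι v) ∧
  (∀ v ∈ σ.G.VT, σ₀.emb.vmap v = σ.emb.vmap v) ∧
  (∀ u v, σ.G.TArc u v →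
    (σ₀.emb.pmap u v).head? = (σ.emb.pmap u v).head? ∧
    (σ₀.emb.pmap u v).getLast? = (σ.emb.pmap u v).getLast? ∧
    ∀ a b, IsArcOf (σ₀.emb.pmap u v) a b ↔
      ∃ c d, IsArcOf (σ.emb.pmap u v) c d ∧ IsArcOf (Pm c d) a b)

/-- `χ` has a long `y`-path: a suppressible degree-(1,1) network vertex between two
network arcs, all three vertices labelled `y`, with no tree vertex embedded into it. -/
def LongYPath (χ : CStruct V Λ) (y : Λ) : Prop :=
  ∃ x₁ x₂ x₃ : V, χ.G.NArc x₁ x₂ ∧ χ.G.NArc x₂ x₃ ∧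
    {u : V | χ.G.NArc u x₂}.ncard = 1 ∧ {u : V | χ.G.NArc x₂ u}.ncard = 1 ∧
    χ.ι x₁ = Sum.inr y ∧ χ.ι x₂ = Sum.inr y ∧ χ.ι x₃ = Sum.inr y ∧
    ∀ w ∈ χ.G.VT, χ.emb.vmap w ≠ x₂

def IsCompact (χ : CStruct V Λ) : Prop := ∀ y : Λ, ¬ LongYPath χ y

/-- `σ` is the compact form of `σ₀`: `σ` is compact and `σ₀` is a subdivision of `σ`. -/
def IsCompactFormOf (σ σ₀ : CStruct V Λ) : Prop :=
  IsCompact σ ∧ ∃ Pm : V → V → List V, IsSubdivisionOfCS σ₀ σ Pm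

/-- Isomorphism of containment structures. -/
def CSIso (χ χ' : CStruct V Λ) : Prop :=
  ∃ f : V → V, Set.BijOn f χ.G.verts χ'.G.verts ∧
    (∀ v ∈ χ.G.verts, (v ∈ χ.G.VT ↔ f v ∈ χ'.G.VT)) ∧
    (∀ v ∈ χ.G.verts, (v ∈ χ.G.VN ↔ f v ∈ χ'.G.VN)) ∧
    (∀ u ∈ χ.G.verts, ∀ v ∈ χ.G.verts, (χ.G.Arc u v ↔ χ'.G.Arc (f u) (f v))) ∧
    (∀ v ∈ χ.G.verts, χ'.ι (f v) = χ.ι v) ∧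
    (∀ v ∈ χ.G.VT, χ'.emb.vmap (f v) = f (χ.emb.vmap v)) ∧
    (∀ u v, χ.G.TArc u v → χ'.emb.pmap (f u) (f v) = (χ.emb.pmap u v).map f)

/-!
Restricting by `g` and then by `h` deletes exactly what restricting by `h ∘ g` deletes.
Whatever is `y`-redundant after relabelling by `g` is `h y`-redundant after relabelling by
`h ∘ g`, as long as `h` sends labels to labels, which restriction functions do. An object that
survives the first restriction is redundant for `h ∘ g` iff it is redundant in the intermediate
structure: the conditions only involve arcs of `χ`, and an arc deleted by the first restriction
is redundant in `χ` for some label, which is forced to be the right one because the arc shares a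
labelled vertex with the object.
-/

lemma _root_.List.IsChain.head?_eq_or_exists_rel {α : Type*} {A : α → α → Prop} :
    ∀ {p : List α}, p.IsChain A → ∀ z ∈ p, p.head? = some z ∨ ∃ w, A w z
  | [], _, _, hz => absurd hz List.not_mem_nil
  | a :: l, hc, z, hz => by
    rcases List.mem_cons.mp hz with rfl | hz
    · exact Or.inl rfl
    · rcases hc.tail.head?_eq_or_exists_rel z hz with hh | hw
      · exact Or.inr ⟨a, (List.isChain_cons.mp hc).1 z hh⟩
      · exact Or.inr hw

lemma EmbOn.mem_verts_of_mem_pmap {Tg Ng : DGraph V} (φ : EmbOn Tg Ng) {u v z : V}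
    (huv : Tg.Arc u v) (hz : z ∈ φ.pmap u v) : z ∈ Ng.verts := by
  obtain ⟨hchain, -, hhead, -⟩ := φ.path_spec huv
  rcases hchain.head?_eq_or_exists_rel z hz with hz | ⟨w, hwz⟩
  · exact Option.some.inj (hhead.symm.trans hz) ▸ φ.vmap_mem u (Tg.arc_left huv)
  · exact Ng.arc_right hwz

namespace DispGraph

variable {G : DispGraph V} {u v : V}

lemma mem_verts_of_mem_VT (h : v ∈ G.VT) : v ∈ G.verts := G.union_eq ▸ Or.inl h

lemma mem_verts_of_mem_VN (h : v ∈ G.VN) : v ∈ G.verts := G.union_eq ▸ Or.inr h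

lemma not_nArc_of_tArc (h : G.TArc u v) : ¬ G.NArc u v :=
  fun hn => G.shared_out u ⟨h.2.1, hn.2.1⟩ v h.1

end DispGraph

namespace CStruct

lemma relabel_ι (χ : CStruct V Λ) (g : V ⊕ Λ → V ⊕ Λ) (v : V) :
    (χ.relabel g).ι v = g (χ.ι v) := rfl

lemma mem_verts_of_mem_pmap (χ : CStruct V Λ) {u v z : V} (ht : χ.G.TArc u v)
    (hz : z ∈ χ.emb.pmap u v) : z ∈ χ.G.verts :=
  χ.G.mem_verts_of_mem_VN (χ.emb.mem_verts_of_mem_pmap ht hz)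

lemma relabel_ι_eq_inr {χ : CStruct V Λ} {h : V ⊕ Λ → V ⊕ Λ} {v : V} {y y' : Λ}
    (hv : χ.ι v = .inr y) (hy : h (.inr y) = .inr y') : (χ.relabel h).ι v = .inr y' := by
  rw [relabel_ι, hv, hy]

end CStruct

section Redundancy

variable {χ : CStruct V Λ} {h : V ⊕ Λ → V ⊕ Λ} {y y' : Λ} {a b v z : V}

lemma ArcRedundant.arc (hr : ArcRedundant χ y a b) : χ.G.Arc a b := by
  rcases hr with hr | hr
  exacts [hr.1.1, hr.1.1]

lemma ArcRedundant.left_label (hr : ArcRedundant χ y a b) : χ.ι a = .inr y := by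
  rcases hr with hr | hr
  exacts [hr.2.1, hr.2.1]

lemma ArcRedundant.right_label (hr : ArcRedundant χ y a b) : χ.ι b = .inr y := by
  rcases hr with hr | hr
  exacts [hr.2.2.1, hr.2.2.1]

lemma ArcRedundant.tArcRedundant (hr : ArcRedundant χ y a b) (ht : χ.G.TArc a b) :
    TArcRedundant χ y a b :=
  hr.resolve_right fun hn => χ.G.not_nArc_of_tArc ht hn.1

lemma VertRedundant.mem_verts (hr : VertRedundant χ y v) : v ∈ χ.G.verts := by
  rcases hr with hr | hr
  exacts [χ.G.mem_verts_of_mem_VT hr.1, χ.G.mem_verts_of_mem_VN hr.1]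

lemma VertRedundant.label (hr : VertRedundant χ y v) : χ.ι v = .inr y := by
  rcases hr with hr | hr
  exacts [hr.2.1, hr.2.1]

lemma TArcRedundant.of_mem_pmap (hr : TArcRedundant χ y a b) (hz : z ∈ χ.emb.pmap a b)
    (hl : χ.ι z = .inr y') : TArcRedundant χ y' a b := by
  obtain rfl := Sum.inr.inj ((hr.2.2.2 z hz).symm.trans hl)
  exact hr

lemma ArcRedundant.of_label (hr : ArcRedundant χ y a b)
    (hl : χ.ι a = .inr y' ∨ χ.ι b = .inr y') : ArcRedundant χ y' a b := by
  obtain rfl : y = y' := by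
    rcases hl with hl | hl
    exacts [Sum.inr.inj (hr.left_label.symm.trans hl), Sum.inr.inj (hr.right_label.symm.trans hl)]
  exact hr

lemma TVertRedundant.of_vmap_label (hr : TVertRedundant χ y v)
    (hl : χ.ι (χ.emb.vmap v) = .inr y') : TVertRedundant χ y' v := by
  obtain rfl := Sum.inr.inj (hr.2.2.1.symm.trans hl)
  exact hr

lemma TArcRedundant.relabel (hy : h (.inr y) = .inr y') (hr : TArcRedundant χ y a b) :
    TArcRedundant (χ.relabel h) y' a b :=
  ⟨hr.1, CStruct.relabel_ι_eq_inr hr.2.1 hy, CStruct.relabel_ι_eq_inr hr.2.2.1 hy,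
    fun z hz => CStruct.relabel_ι_eq_inr (hr.2.2.2 z hz) hy⟩

lemma NArcRedundant.relabel (hy : h (.inr y) = .inr y') (hr : NArcRedundant χ y a b) :
    NArcRedundant (χ.relabel h) y' a b :=
  ⟨hr.1, CStruct.relabel_ι_eq_inr hr.2.1 hy, CStruct.relabel_ι_eq_inr hr.2.2.1 hy,
    fun u v ht hi => (hr.2.2.2 u v ht hi).relabel hy⟩

lemma ArcRedundant.relabel (hy : h (.inr y) = .inr y') (hr : ArcRedundant χ y a b) :
    ArcRedundant (χ.relabel h) y' a b :=
  hr.imp (TArcRedundant.relabel hy) (NArcRedundant.relabel hy)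

lemma TVertRedundant.relabel (hy : h (.inr y) = .inr y') (hr : TVertRedundant χ y v) :
    TVertRedundant (χ.relabel h) y' v :=
  ⟨hr.1, CStruct.relabel_ι_eq_inr hr.2.1 hy, CStruct.relabel_ι_eq_inr hr.2.2.1 hy,
    fun u hu => (hr.2.2.2.1 u hu).relabel hy, fun u hu => (hr.2.2.2.2.1 u hu).relabel hy,
    fun u hu => (hr.2.2.2.2.2.1 u hu).relabel hy, fun u hu => (hr.2.2.2.2.2.2 u hu).relabel hy⟩

lemma NVertRedundant.relabel (hy : h (.inr y) = .inr y') (hr : NVertRedundant χ y v) :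
    NVertRedundant (χ.relabel h) y' v :=
  ⟨hr.1, CStruct.relabel_ι_eq_inr hr.2.1 hy, fun u hu => (hr.2.2.1 u hu).relabel hy,
    fun u hu => (hr.2.2.2.1 u hu).relabel hy, fun w hw hwv => (hr.2.2.2.2 w hw hwv).relabel hy⟩

lemma VertRedundant.relabel (hy : h (.inr y) = .inr y') (hr : VertRedundant χ y v) :
    VertRedundant (χ.relabel h) y' v :=
  hr.imp (TVertRedundant.relabel hy) (NVertRedundant.relabel hy)

end Redundancy

def KeepsLabels (h : V ⊕ Λ → V ⊕ Λ) (χ : CStruct V Λ) : Prop :=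
  ∀ v ∈ χ.G.verts, ∀ y, χ.ι v = .inr y → ∃ y', h (.inr y) = .inr y'

namespace KeepsLabels

variable {χ : CStruct V Λ} {h : V ⊕ Λ → V ⊕ Λ} {y : Λ} {a b v : V}

lemma exists_arcRedundant (hk : KeepsLabels h χ) (hr : ArcRedundant χ y a b) :
    ∃ y', ArcRedundant (χ.relabel h) y' a b :=
  let ⟨y', hy⟩ := hk a (χ.G.arc_left hr.arc) y hr.left_label
  ⟨y', hr.relabel hy⟩

lemma exists_tVertRedundant (hk : KeepsLabels h χ) (hr : TVertRedundant χ y v) :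
    ∃ y', TVertRedundant (χ.relabel h) y' v :=
  let ⟨y', hy⟩ := hk v (χ.G.mem_verts_of_mem_VT hr.1) y hr.2.1
  ⟨y', hr.relabel hy⟩

lemma exists_vertRedundant (hk : KeepsLabels h χ) (hr : VertRedundant χ y v) :
    ∃ y', VertRedundant (χ.relabel h) y' v :=
  let ⟨y', hy⟩ := hk v hr.mem_verts y hr.label
  ⟨y', hr.relabel hy⟩

end KeepsLabels

lemma IsRestrictionFun.mem_of_eq_inr {S S' : Set V} {Ys : Set Λ} {g : V ⊕ Λ → V ⊕ Λ}
    (hg : IsRestrictionFun S S' Ys g) {x : V ⊕ Λ} {y : Λ}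
    (hx : (∃ s ∈ S, x = .inl s) ∨ (∃ y ∈ Ys, x = .inr y)) (hgx : g x = .inr y) :
    y ∈ Ys := by
  rcases hx with ⟨s, hs, rfl⟩ | ⟨y₀, hy₀, rfl⟩
  · by_cases hs' : s ∈ S'
    · exact absurd (hg.1 s hs' ▸ hgx) Sum.inl_ne_inr
    · obtain ⟨y', hy', he⟩ := hg.2.1 s hs hs'
      exact Sum.inr.inj (he.symm.trans hgx) ▸ hy'
  · obtain ⟨y', hy', he⟩ := hg.2.2 y₀ hy₀
    exact Sum.inr.inj (he.symm.trans hgx) ▸ hy'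

lemma IsIsolabelling.keepsLabels_relabel {Din : DispGraph V} {S S' S'' : Set V} {Ys : Set Λ}
    {χ : CStruct V Λ} {g h : V ⊕ Λ → V ⊕ Λ} (hχ : IsIsolabelling Din S Ys χ)
    (hg : IsRestrictionFun S S' Ys g) (hh : IsRestrictionFun S' S'' Ys h) :
    KeepsLabels h (χ.relabel g) := fun v hv y hy =>
  let ⟨y', _, hy'⟩ := hh.2.2 y (hg.mem_of_eq_inr (hχ.1 v hv) hy)
  ⟨y', hy'⟩

namespace IsRestrictionOf

variable {g h : V ⊕ Λ → V ⊕ Λ} {χ χ' : CStruct V Λ} {y : Λ} {u v a b : V}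

lemma mem_verts_iff (hr : IsRestrictionOf g χ' χ) :
    v ∈ χ'.G.verts ↔ v ∈ χ.G.verts ∧ ¬ ∃ y, VertRedundant (χ.relabel g) y v := by
  rw [hr.1]; rfl

lemma verts_subset (hr : IsRestrictionOf g χ' χ) : χ'.G.verts ⊆ χ.G.verts :=
  fun _ hv => (hr.mem_verts_iff.1 hv).1

lemma arc_iff (hr : IsRestrictionOf g χ' χ) :
    χ'.G.Arc a b ↔ χ.G.Arc a b ∧ ¬ ∃ y, ArcRedundant (χ.relabel g) y a b :=
  hr.2.1 a b

lemma arc (hr : IsRestrictionOf g χ' χ) (hab : χ'.G.Arc a b) : χ.G.Arc a b :=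
  (hr.arc_iff.1 hab).1

lemma mem_VT_iff (hr : IsRestrictionOf g χ' χ) :
    v ∈ χ'.G.VT ↔ v ∈ χ.G.VT ∧ v ∈ χ'.G.verts := by
  rw [hr.2.2.1]; rfl

lemma mem_VN_iff (hr : IsRestrictionOf g χ' χ) :
    v ∈ χ'.G.VN ↔ v ∈ χ.G.VN ∧ v ∈ χ'.G.verts := by
  rw [hr.2.2.2.1]; rfl

lemma tArc_iff (hr : IsRestrictionOf g χ' χ) :
    χ'.G.TArc a b ↔ χ.G.TArc a b ∧ χ'.G.Arc a b :=
  ⟨fun ht => ⟨⟨hr.arc ht.1, (hr.mem_VT_iff.1 ht.2.1).1, (hr.mem_VT_iff.1 ht.2.2).1⟩,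
      ht.1⟩,
    fun ⟨ht, hab⟩ => ⟨hab, hr.mem_VT_iff.2 ⟨ht.2.1, χ'.G.arc_left hab⟩,
      hr.mem_VT_iff.2 ⟨ht.2.2, χ'.G.arc_right hab⟩⟩⟩

lemma nArc_iff (hr : IsRestrictionOf g χ' χ) :
    χ'.G.NArc a b ↔ χ.G.NArc a b ∧ χ'.G.Arc a b :=
  ⟨fun hn => ⟨⟨hr.arc hn.1, (hr.mem_VN_iff.1 hn.2.1).1, (hr.mem_VN_iff.1 hn.2.2).1⟩,
      hn.1⟩,
    fun ⟨hn, hab⟩ => ⟨hab, hr.mem_VN_iff.2 ⟨hn.2.1, χ'.G.arc_left hab⟩,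
      hr.mem_VN_iff.2 ⟨hn.2.2, χ'.G.arc_right hab⟩⟩⟩

lemma vmap_eq (hr : IsRestrictionOf g χ' χ) (hv : v ∈ χ'.G.VT) :
    χ'.emb.vmap v = χ.emb.vmap v :=
  hr.2.2.2.2.1 v hv

lemma pmap_eq (hr : IsRestrictionOf g χ' χ) (ht : χ'.G.TArc a b) :
    χ'.emb.pmap a b = χ.emb.pmap a b :=
  hr.2.2.2.2.2.1 a b ht

lemma ι_eq (hr : IsRestrictionOf g χ' χ) (hv : v ∈ χ'.G.verts) : χ'.ι v = g (χ.ι v) :=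
  hr.2.2.2.2.2.2 v hv

lemma relabel_ι_eq (hr : IsRestrictionOf g χ' χ) (hv : v ∈ χ'.G.verts) :
    (χ'.relabel h).ι v = (χ.relabel (h ∘ g)).ι v :=
  congrArg h (hr.ι_eq hv)

lemma vmap_mem_verts (hr : IsRestrictionOf g χ' χ) (hv : v ∈ χ'.G.VT) :
    χ.emb.vmap v ∈ χ'.G.verts :=
  hr.vmap_eq hv ▸ χ'.G.mem_verts_of_mem_VN (χ'.emb.vmap_mem v hv)

lemma exists_vertRedundant_of_not_mem (hr : IsRestrictionOf g χ' χ) (hv : v ∈ χ.G.verts)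
    (hn : v ∉ χ'.G.verts) : ∃ y, VertRedundant (χ.relabel g) y v := by
  by_contra hno
  exact hn (hr.mem_verts_iff.2 ⟨hv, hno⟩)

lemma exists_arcRedundant_of_not_arc (hr : IsRestrictionOf g χ' χ) (hab : χ.G.Arc a b)
    (hn : ¬ χ'.G.Arc a b) : ∃ y, ArcRedundant (χ.relabel g) y a b := by
  by_contra hno
  exact hn (hr.arc_iff.2 ⟨hab, hno⟩)

lemma exists_arcRedundant_comp_of_not_arc (hr : IsRestrictionOf g χ' χ)
    (hk : KeepsLabels h (χ.relabel g)) (hab : χ.G.Arc a b) (hn : ¬ χ'.G.Arc a b) :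
    ∃ y, ArcRedundant (χ.relabel (h ∘ g)) y a b :=
  let ⟨_, hy⟩ := hr.exists_arcRedundant_of_not_arc hab hn
  hk.exists_arcRedundant hy

lemma tArcRedundant_of_comp (hr : IsRestrictionOf g χ' χ) (hab : χ'.G.Arc a b)
    (hred : TArcRedundant (χ.relabel (h ∘ g)) y a b) : TArcRedundant (χ'.relabel h) y a b := by
  obtain ⟨ht, ha, hb, hp⟩ := hred
  have ht' : χ'.G.TArc a b := hr.tArc_iff.2 ⟨ht, hab⟩
  refine ⟨ht', (hr.relabel_ι_eq (χ'.G.arc_left hab)).trans ha,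
    (hr.relabel_ι_eq (χ'.G.arc_right hab)).trans hb, fun z hz => ?_⟩
  exact (hr.relabel_ι_eq (χ'.mem_verts_of_mem_pmap ht' hz)).trans (hp z (hr.pmap_eq ht' ▸ hz))

lemma nArcRedundant_of_comp (hr : IsRestrictionOf g χ' χ) (hab : χ'.G.Arc a b)
    (hred : NArcRedundant (χ.relabel (h ∘ g)) y a b) : NArcRedundant (χ'.relabel h) y a b := by
  obtain ⟨hn, ha, hb, hcov⟩ := hred
  refine ⟨hr.nArc_iff.2 ⟨hn, hab⟩, (hr.relabel_ι_eq (χ'.G.arc_left hab)).trans ha,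
    (hr.relabel_ι_eq (χ'.G.arc_right hab)).trans hb, fun u v ht hi => ?_⟩
  have ht' : χ'.G.TArc u v := ht
  exact hr.tArcRedundant_of_comp ht'.1
    (hcov u v (hr.tArc_iff.1 ht').1 (hr.pmap_eq ht' ▸ hi))

lemma arcRedundant_of_comp (hr : IsRestrictionOf g χ' χ) (hab : χ'.G.Arc a b)
    (hred : ArcRedundant (χ.relabel (h ∘ g)) y a b) : ArcRedundant (χ'.relabel h) y a b :=
  hred.imp (hr.tArcRedundant_of_comp hab) (hr.nArcRedundant_of_comp hab)

lemma tVertRedundant_of_comp (hr : IsRestrictionOf g χ' χ) (hv : v ∈ χ'.G.verts)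
    (hred : TVertRedundant (χ.relabel (h ∘ g)) y v) : TVertRedundant (χ'.relabel h) y v := by
  obtain ⟨hvT, hl, hlm, hin, hout, hinm, houtm⟩ := hred
  have hvT' : v ∈ χ'.G.VT := hr.mem_VT_iff.2 ⟨hvT, hv⟩
  have hm : χ'.emb.vmap v = χ.emb.vmap v := hr.vmap_eq hvT'
  refine ⟨hvT', (hr.relabel_ι_eq hv).trans hl, ?_, fun u hu => ?_, fun u hu => ?_,
    fun u hu => ?_, fun u hu => ?_⟩
  · exact hm ▸ (hr.relabel_ι_eq (hr.vmap_mem_verts hvT')).trans hlm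
  · exact hr.arcRedundant_of_comp hu (hin u (hr.arc hu))
  · exact hr.arcRedundant_of_comp hu (hout u (hr.arc hu))
  · rw [show (χ'.relabel h).emb.vmap v = χ.emb.vmap v from hm] at hu ⊢
    exact hr.arcRedundant_of_comp hu (hinm u (hr.arc hu))
  · rw [show (χ'.relabel h).emb.vmap v = χ.emb.vmap v from hm] at hu ⊢
    exact hr.arcRedundant_of_comp hu (houtm u (hr.arc hu))

lemma nVertRedundant_of_comp (hr : IsRestrictionOf g χ' χ) (hv : v ∈ χ'.G.verts)
    (hred : NVertRedundant (χ.relabel (h ∘ g)) y v) : NVertRedundant (χ'.relabel h) y v := by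
  obtain ⟨hvN, hl, hin, hout, hemb⟩ := hred
  refine ⟨hr.mem_VN_iff.2 ⟨hvN, hv⟩, (hr.relabel_ι_eq hv).trans hl,
    fun u hu => hr.arcRedundant_of_comp hu (hin u (hr.arc hu)),
    fun u hu => hr.arcRedundant_of_comp hu (hout u (hr.arc hu)), fun w hw hwv => ?_⟩
  have hw' : w ∈ χ'.G.VT := hw
  exact hr.tVertRedundant_of_comp (χ'.G.mem_verts_of_mem_VT hw')
    (hemb w (hr.mem_VT_iff.1 hw').1 ((hr.vmap_eq hw').symm.trans hwv))

lemma vertRedundant_of_comp (hr : IsRestrictionOf g χ' χ) (hv : v ∈ χ'.G.verts)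
    (hred : VertRedundant (χ.relabel (h ∘ g)) y v) : VertRedundant (χ'.relabel h) y v :=
  hred.imp (hr.tVertRedundant_of_comp hv) (hr.nVertRedundant_of_comp hv)

lemma tArcRedundant_comp (hr : IsRestrictionOf g χ' χ)
    (hred : TArcRedundant (χ'.relabel h) y a b) : TArcRedundant (χ.relabel (h ∘ g)) y a b := by
  obtain ⟨ht', ha, hb, hp⟩ := hred
  refine ⟨(hr.tArc_iff.1 ht').1, (hr.relabel_ι_eq (χ'.G.arc_left ht'.1)).symm.trans ha,
    (hr.relabel_ι_eq (χ'.G.arc_right ht'.1)).symm.trans hb, fun z hz => ?_⟩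
  have hz' : z ∈ χ'.emb.pmap a b := hr.pmap_eq ht' ▸ hz
  exact (hr.relabel_ι_eq (χ'.mem_verts_of_mem_pmap ht' hz')).symm.trans (hp z hz')

/-- A tree arc covering `ab` that the first restriction deleted is redundant for the label of
`a`, because `a` lies on its embedding path. -/
lemma nArcRedundant_comp (hr : IsRestrictionOf g χ' χ) (hk : KeepsLabels h (χ.relabel g))
    (hred : NArcRedundant (χ'.relabel h) y a b) : NArcRedundant (χ.relabel (h ∘ g)) y a b := by
  obtain ⟨hn', ha, hb, hcov⟩ := hred
  have ha' : (χ.relabel (h ∘ g)).ι a = .inr y :=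
    (hr.relabel_ι_eq (χ'.G.arc_left hn'.1)).symm.trans ha
  refine ⟨(hr.nArc_iff.1 hn').1, ha', (hr.relabel_ι_eq (χ'.G.arc_right hn'.1)).symm.trans hb,
    fun u v ht hi => ?_⟩
  by_cases huv : χ'.G.Arc u v
  · have ht' : χ'.G.TArc u v := hr.tArc_iff.2 ⟨ht, huv⟩
    exact hr.tArcRedundant_comp (hcov u v ht' (hr.pmap_eq ht' ▸ hi))
  · obtain ⟨_, hy'⟩ := hr.exists_arcRedundant_comp_of_not_arc hk ht.1 huv
    exact (hy'.tArcRedundant ht).of_mem_pmap (isArcOf_mem_left hi) ha'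

lemma arcRedundant_comp (hr : IsRestrictionOf g χ' χ) (hk : KeepsLabels h (χ.relabel g))
    (hred : ArcRedundant (χ'.relabel h) y a b) : ArcRedundant (χ.relabel (h ∘ g)) y a b :=
  hred.imp hr.tArcRedundant_comp (hr.nArcRedundant_comp hk)

lemma arcRedundant_comp_of_label (hr : IsRestrictionOf g χ' χ)
    (hk : KeepsLabels h (χ.relabel g)) (hab : χ.G.Arc a b)
    (hsurv : χ'.G.Arc a b → ArcRedundant (χ'.relabel h) y a b)
    (hl : (χ.relabel (h ∘ g)).ι a = .inr y ∨ (χ.relabel (h ∘ g)).ι b = .inr y) :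
    ArcRedundant (χ.relabel (h ∘ g)) y a b := by
  by_cases hab' : χ'.G.Arc a b
  · exact hr.arcRedundant_comp hk (hsurv hab')
  · obtain ⟨_, hy'⟩ := hr.exists_arcRedundant_comp_of_not_arc hk hab hab'
    exact hy'.of_label hl

lemma tVertRedundant_comp (hr : IsRestrictionOf g χ' χ) (hk : KeepsLabels h (χ.relabel g))
    (hred : TVertRedundant (χ'.relabel h) y v) : TVertRedundant (χ.relabel (h ∘ g)) y v := by
  obtain ⟨hvT', hl, hlm, hin, hout, hinm, houtm⟩ := hred
  have hm : (χ'.relabel h).emb.vmap v = χ.emb.vmap v := hr.vmap_eq hvT'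
  have hl' : (χ.relabel (h ∘ g)).ι v = .inr y :=
    (hr.relabel_ι_eq (χ'.G.mem_verts_of_mem_VT hvT')).symm.trans hl
  have hlm' : (χ.relabel (h ∘ g)).ι (χ.emb.vmap v) = .inr y :=
    (hr.relabel_ι_eq (hr.vmap_mem_verts hvT')).symm.trans (hm ▸ hlm)
  rw [hm] at hinm houtm
  exact ⟨(hr.mem_VT_iff.1 hvT').1, hl', hlm',
    fun u hu => hr.arcRedundant_comp_of_label hk hu (hin u) (.inr hl'),
    fun u hu => hr.arcRedundant_comp_of_label hk hu (hout u) (.inl hl'),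
    fun u hu => hr.arcRedundant_comp_of_label hk hu (hinm u) (.inr hlm'),
    fun u hu => hr.arcRedundant_comp_of_label hk hu (houtm u) (.inl hlm')⟩

/-- A tree vertex embedded into `v` but deleted by the first restriction cannot be a network
vertex (it would be fixed by the embedding, hence equal to `v`), so it was tree-redundant, for
the label of its image `v`. -/
lemma nVertRedundant_comp (hr : IsRestrictionOf g χ' χ) (hk : KeepsLabels h (χ.relabel g))
    (hred : NVertRedundant (χ'.relabel h) y v) : NVertRedundant (χ.relabel (h ∘ g)) y v := by
  obtain ⟨hvN', hl, hin, hout, hemb⟩ := hred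
  have hv' : v ∈ χ'.G.verts := χ'.G.mem_verts_of_mem_VN hvN'
  have hl' : (χ.relabel (h ∘ g)).ι v = .inr y := (hr.relabel_ι_eq hv').symm.trans hl
  refine ⟨(hr.mem_VN_iff.1 hvN').1, hl',
    fun u hu => hr.arcRedundant_comp_of_label hk hu (hin u) (.inr hl'),
    fun u hu => hr.arcRedundant_comp_of_label hk hu (hout u) (.inl hl'), fun w hw hwv => ?_⟩
  by_cases hw' : w ∈ χ'.G.verts
  · have hwT : w ∈ χ'.G.VT := hr.mem_VT_iff.2 ⟨hw, hw'⟩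
    exact hr.tVertRedundant_comp hk (hemb w hwT ((hr.vmap_eq hwT).trans hwv))
  · obtain ⟨_, hy'⟩ := hr.exists_vertRedundant_of_not_mem (χ.G.mem_verts_of_mem_VT hw) hw'
    have hT := hy'.resolve_right fun hN =>
      hw' ((χ.emb.fixes w ⟨hw, hN.1⟩).symm.trans hwv ▸ hv')
    obtain ⟨_, hy₂⟩ := hk.exists_tVertRedundant hT
    exact hy₂.of_vmap_label (hwv ▸ hl')

lemma vertRedundant_comp (hr : IsRestrictionOf g χ' χ) (hk : KeepsLabels h (χ.relabel g))
    (hred : VertRedundant (χ'.relabel h) y v) : VertRedundant (χ.relabel (h ∘ g)) y v :=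
  hred.imp (hr.tVertRedundant_comp hk) (hr.nVertRedundant_comp hk)

lemma arcRedundant_comp_iff (hr : IsRestrictionOf g χ' χ) (hk : KeepsLabels h (χ.relabel g))
    (hab : χ'.G.Arc a b) :
    ArcRedundant (χ.relabel (h ∘ g)) y a b ↔ ArcRedundant (χ'.relabel h) y a b :=
  ⟨hr.arcRedundant_of_comp hab, hr.arcRedundant_comp hk⟩

lemma vertRedundant_comp_iff (hr : IsRestrictionOf g χ' χ) (hk : KeepsLabels h (χ.relabel g))
    (hv : v ∈ χ'.G.verts) :
    VertRedundant (χ.relabel (h ∘ g)) y v ↔ VertRedundant (χ'.relabel h) y v :=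
  ⟨hr.vertRedundant_of_comp hv, hr.vertRedundant_comp hk⟩

theorem trans {χ'' : CStruct V Λ} (h1 : IsRestrictionOf g χ' χ)
    (hk : KeepsLabels h (χ.relabel g)) (h2 : IsRestrictionOf h χ'' χ') :
    IsRestrictionOf (h ∘ g) χ'' χ := by
  refine ⟨Set.ext fun v => ?_, fun a b => ?_, ?_, ?_, fun v hv => ?_, fun a b ht => ?_,
    fun v hv => ?_⟩
  · rw [h2.mem_verts_iff]
    constructor
    · rintro ⟨hv', hn⟩
      exact ⟨h1.verts_subset hv', fun ⟨y, hy⟩ =>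
        hn ⟨y, (h1.vertRedundant_comp_iff hk hv').1 hy⟩⟩
    · rintro ⟨hv, hn⟩
      have hv' : v ∈ χ'.G.verts :=
        h1.mem_verts_iff.2 ⟨hv, fun ⟨_, hy⟩ => hn (hk.exists_vertRedundant hy)⟩
      exact ⟨hv', fun ⟨y, hy⟩ => hn ⟨y, (h1.vertRedundant_comp_iff hk hv').2 hy⟩⟩
  · rw [h2.arc_iff]
    constructor
    · rintro ⟨hab', hn⟩
      exact ⟨h1.arc hab', fun ⟨y, hy⟩ =>
        hn ⟨y, (h1.arcRedundant_comp_iff hk hab').1 hy⟩⟩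
    · rintro ⟨hab, hn⟩
      have hab' : χ'.G.Arc a b :=
        h1.arc_iff.2 ⟨hab, fun ⟨_, hy⟩ => hn (hk.exists_arcRedundant hy)⟩
      exact ⟨hab', fun ⟨y, hy⟩ => hn ⟨y, (h1.arcRedundant_comp_iff hk hab').2 hy⟩⟩
  · rw [h2.2.2.1, h1.2.2.1, Set.inter_assoc, Set.inter_eq_right.2 h2.verts_subset]
  · rw [h2.2.2.2.1, h1.2.2.2.1, Set.inter_assoc, Set.inter_eq_right.2 h2.verts_subset]
  · exact (h2.vmap_eq hv).trans (h1.vmap_eq (h2.mem_VT_iff.1 hv).1)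
  · exact (h2.pmap_eq ht).trans (h1.pmap_eq (h2.tArc_iff.1 ht).1)
  · exact (h2.ι_eq hv).trans (congrArg h (h1.ι_eq (h2.verts_subset hv)))

end IsRestrictionOf

theorem restriction_trans_general {V Λ : Type} (Din : DispGraph V) (S S' S'' : Set V) (Ys : Set Λ)
    (g' g'' : V ⊕ Λ → V ⊕ Λ)
    (hg' : IsRestrictionFun S S' Ys g') (hg'' : IsRestrictionFun S' S'' Ys g'')
    (χ χ' χ'' : CStruct V Λ) (hχ : IsCS Din S Ys χ)
    (h1 : IsRestrictionOf g' χ' χ) (h2 : IsRestrictionOf g'' χ'' χ') :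
    IsRestrictionOf (g'' ∘ g') χ'' χ :=
  h1.trans (hχ.1.keepsLabels_relabel hg' hg'') h2

/-- Restrictions of containment structures compose transitively. -/
theorem restriction_trans {V Λ : Type} (Din : DispGraph V) (S S' S'' : Set V) (Ys : Set Λ)
    (hS' : S' ⊆ S) (hS'' : S'' ⊆ S')
    (g' g'' : V ⊕ Λ → V ⊕ Λ)
    (hg' : IsRestrictionFun S S' Ys g') (hg'' : IsRestrictionFun S' S'' Ys g'')
    (χ χ' χ'' : CStruct V Λ) (hχ : IsCS Din S Ys χ)
    (h1 : IsRestrictionOf g' χ' χ) (h2 : IsRestrictionOf g'' χ'' χ') :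
    IsRestrictionOf (g'' ∘ g') χ'' χ :=
  restriction_trans_general Din S S' S'' Ys g' g'' hg' hg'' χ χ' χ'' hχ h1 h2

end TreeContainment
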